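/- arXiv:0805.0256 — 4 statements merged into one kernel-verified Lean document; each statement's English description precedes it below -/
import Mathlib

section
/- If A is a commutative ring equipped with p-derivations δ_{p_1}, δ_{p_2} for distinct primes p_1, p_2 such that the commutation identity δ_{p_1}δ_{p_2}a - δ_{p_2}δ_{p_1}a = C_{p_1,p_2}(a, δ_{p_1}a, δ_{p_2}a) holds for all a, and the primes are non-zero divisors in A, then the associated Frobenius lifts commute: φ_{p_1}φ_{p_2}(a) = φ_{p_2}φ_{p_1}(a) for all a ∈ A. -/
open MvPolynomial

/-!
Under the Frobenius lifts `φ_k a = a ^ p_k + p_k δ_k a` the additivity and multiplicativity laws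
of a `p`-derivation say exactly that `φ_k` is additive and multiplicative. Hence
`φ₁ (φ₂ a) = φ₁ a ^ p₂ + p₂ φ₁ (δ₂ a) = φ₁ a ^ p₂ + p₂ (δ₂ a) ^ p₁ + p₁ p₂ δ₁ δ₂ a`,
and symmetrically. After clearing the denominators of `C_{p₁,p₂}`, the commutation identity is
precisely the vanishing of the difference of these two expansions.
-/

theorem map_pow_of_ne_zero {M N F : Type*} [Monoid M] [Monoid N] [FunLike F M N]
    [MulHomClass F M N] (f : F) (x : M) {n : ℕ} (hn : n ≠ 0) : f (x ^ n) = f x ^ n := by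
  induction n with
  | zero => exact absurd rfl hn
  | succ n ih =>
    rcases eq_or_ne n 0 with rfl | hn'
    · simp
    · rw [pow_succ, map_mul, ih hn', pow_succ]

section FrobeniusLift

variable {A : Type*} [CommRing A] {p : ℕ} {C : MvPolynomial (Fin 2) ℤ}

theorem natCast_mul_aeval_eq
    (hC : (p : MvPolynomial (Fin 2) ℤ) * C = X 0 ^ p + X 1 ^ p - (X 0 + X 1) ^ p) (x y : A) :
    (p : A) * aeval ![x, y] C = x ^ p + y ^ p - (x + y) ^ p := by
  simpa using congrArg (aeval (R := ℤ) ![x, y]) hC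

variable (p C) {δ : A → A}

def frobeniusLift
    (hC : (p : MvPolynomial (Fin 2) ℤ) * C = X 0 ^ p + X 1 ^ p - (X 0 + X 1) ^ p)
    (hadd : ∀ a b : A, δ (a + b) = δ a + δ b + aeval ![a, b] C)
    (hmul : ∀ a b : A, δ (a * b) = a ^ p * δ b + b ^ p * δ a + (p : A) * δ a * δ b) :
    A →ₙ+* A where
  toFun a := a ^ p + p * δ a
  map_mul' a b := by
    simp only [hmul]
    ring
  map_add' a b := by
    simp only [hadd]
    linear_combination natCast_mul_aeval_eq hC a b
  map_zero' := by
    have h := hadd 0 0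
    rw [add_zero] at h
    linear_combination -(p : A) * h - natCast_mul_aeval_eq hC (0 : A) 0

variable {p C} (hC : (p : MvPolynomial (Fin 2) ℤ) * C = X 0 ^ p + X 1 ^ p - (X 0 + X 1) ^ p)
  (hadd : ∀ a b : A, δ (a + b) = δ a + δ b + aeval ![a, b] C)
  (hmul : ∀ a b : A, δ (a * b) = a ^ p * δ b + b ^ p * δ a + (p : A) * δ a * δ b)

theorem frobeniusLift_apply (a : A) : frobeniusLift p C hC hadd hmul a = a ^ p + p * δ a := rfl

theorem frobeniusLift_pow_add_natCast_mul {n : ℕ} (hn : n ≠ 0) (x y : A) :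
    frobeniusLift p C hC hadd hmul (x ^ n + n * y) =
      frobeniusLift p C hC hadd hmul x ^ n + n * frobeniusLift p C hC hadd hmul y := by
  rw [map_add, map_pow_of_ne_zero _ _ hn, ← nsmul_eq_mul, map_nsmul, nsmul_eq_mul]

end FrobeniusLift

theorem stmt_4_general {A : Type*} [CommRing A]
    (p₁ p₂ : ℕ) (hp₁ : p₁.Prime) (hp₂ : p₂.Prime)
    (Cp₁ Cp₂ : MvPolynomial (Fin 2) ℤ)
    (hCp₁ : (p₁ : MvPolynomial (Fin 2) ℤ) * Cp₁ =
      (X 0) ^ p₁ + (X 1) ^ p₁ - (X 0 + X 1) ^ p₁)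
    (hCp₂ : (p₂ : MvPolynomial (Fin 2) ℤ) * Cp₂ =
      (X 0) ^ p₂ + (X 1) ^ p₂ - (X 0 + X 1) ^ p₂)
    (d₁₂ d₂₁ : ℤ)
    (hd₁₂ : (p₁ : ℤ) * d₁₂ = (p₂ : ℤ) - (p₂ : ℤ) ^ p₁)
    (hd₂₁ : (p₂ : ℤ) * d₂₁ = (p₁ : ℤ) - (p₁ : ℤ) ^ p₂)
    (δ₁ δ₂ : A → A)
    (hadd₁ : ∀ a b : A, δ₁ (a + b) = δ₁ a + δ₁ b + MvPolynomial.aeval ![a, b] Cp₁)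
    (hmul₁ : ∀ a b : A, δ₁ (a * b) =
      a ^ p₁ * δ₁ b + b ^ p₁ * δ₁ a + (p₁ : A) * δ₁ a * δ₁ b)
    (hadd₂ : ∀ a b : A, δ₂ (a + b) = δ₂ a + δ₂ b + MvPolynomial.aeval ![a, b] Cp₂)
    (hmul₂ : ∀ a b : A, δ₂ (a * b) =
      a ^ p₂ * δ₂ b + b ^ p₂ * δ₂ a + (p₂ : A) * δ₂ a * δ₂ b)
    (hcomm : ∀ a : A,
      (p₁ : A) * (p₂ : A) * (δ₁ (δ₂ a) - δ₂ (δ₁ a)) =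
        (p₂ : A) * MvPolynomial.aeval ![a ^ p₁, (p₁ : A) * δ₁ a] Cp₂
        - (p₁ : A) * MvPolynomial.aeval ![a ^ p₂, (p₂ : A) * δ₂ a] Cp₁
        - (p₁ : A) * (d₁₂ : A) * (δ₂ a) ^ p₁
        + (p₂ : A) * (d₂₁ : A) * (δ₁ a) ^ p₂) :
    ∀ a : A,
      ((a ^ p₂ + (p₂ : A) * δ₂ a) ^ p₁ + (p₁ : A) * δ₁ (a ^ p₂ + (p₂ : A) * δ₂ a)) =
      ((a ^ p₁ + (p₁ : A) * δ₁ a) ^ p₂ + (p₂ : A) * δ₂ (a ^ p₁ + (p₁ : A) * δ₁ a)) := by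
  intro a
  set φ₁ := frobeniusLift p₁ Cp₁ hCp₁ hadd₁ hmul₁
  set φ₂ := frobeniusLift p₂ Cp₂ hCp₂ hadd₂ hmul₂
  change φ₁ (a ^ p₂ + p₂ * δ₂ a) = φ₂ (a ^ p₁ + p₁ * δ₁ a)
  rw [frobeniusLift_pow_add_natCast_mul _ _ _ hp₂.ne_zero,
    frobeniusLift_pow_add_natCast_mul _ _ _ hp₁.ne_zero]
  simp only [frobeniusLift_apply]
  have hd₁₂' : (p₁ : A) * d₁₂ = p₂ - p₂ ^ p₁ := by
    exact_mod_cast congrArg (Int.cast (R := A)) hd₁₂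
  have hd₂₁' : (p₂ : A) * d₂₁ = p₁ - p₁ ^ p₂ := by
    exact_mod_cast congrArg (Int.cast (R := A)) hd₂₁
  linear_combination hcomm a + natCast_mul_aeval_eq hCp₂ (a ^ p₁) (p₁ * δ₁ a)
    - natCast_mul_aeval_eq hCp₁ (a ^ p₂) (p₂ * δ₂ a)
    - δ₂ a ^ p₁ * hd₁₂' + δ₁ a ^ p₂ * hd₂₁'

/-- If `A` carries `p₁`- and `p₂`-derivations (for distinct primes `p₁, p₂`,
non-zero divisors in `A`) satisfying the commutation identity
`δ₁δ₂a - δ₂δ₁a = C_{p₁,p₂}(a, δ₁a, δ₂a)` (written multiplied through by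
`p₁p₂`), then the associated Frobenius lifts `φ_k(a) = a^{p_k} + p_k δ_k a`
commute. Here `C_p ∈ ℤ[X,Y]` satisfies `p·C_p = X^p + Y^p - (X+Y)^p`, and
`d₁₂ = δ_{p₁}(p₂) = (p₂ - p₂^{p₁})/p₁`, `d₂₁ = δ_{p₂}(p₁) = (p₁ - p₁^{p₂})/p₂`
are the Fermat quotients on `ℤ`. -/
theorem stmt_4 {A : Type*} [CommRing A]
    (p₁ p₂ : ℕ) (hp₁ : p₁.Prime) (hp₂ : p₂.Prime) (hne : p₁ ≠ p₂)
    (Cp₁ Cp₂ : MvPolynomial (Fin 2) ℤ)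
    (hCp₁ : (p₁ : MvPolynomial (Fin 2) ℤ) * Cp₁ =
      (X 0) ^ p₁ + (X 1) ^ p₁ - (X 0 + X 1) ^ p₁)
    (hCp₂ : (p₂ : MvPolynomial (Fin 2) ℤ) * Cp₂ =
      (X 0) ^ p₂ + (X 1) ^ p₂ - (X 0 + X 1) ^ p₂)
    (d₁₂ d₂₁ : ℤ)
    (hd₁₂ : (p₁ : ℤ) * d₁₂ = (p₂ : ℤ) - (p₂ : ℤ) ^ p₁)
    (hd₂₁ : (p₂ : ℤ) * d₂₁ = (p₁ : ℤ) - (p₁ : ℤ) ^ p₂)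
    (hreg₁ : ∀ a : A, (p₁ : A) * a = 0 → a = 0)
    (hreg₂ : ∀ a : A, (p₂ : A) * a = 0 → a = 0)
    (δ₁ δ₂ : A → A)
    (hadd₁ : ∀ a b : A, δ₁ (a + b) = δ₁ a + δ₁ b + MvPolynomial.aeval ![a, b] Cp₁)
    (hmul₁ : ∀ a b : A, δ₁ (a * b) =
      a ^ p₁ * δ₁ b + b ^ p₁ * δ₁ a + (p₁ : A) * δ₁ a * δ₁ b)
    (hadd₂ : ∀ a b : A, δ₂ (a + b) = δ₂ a + δ₂ b + MvPolynomial.aeval ![a, b] Cp₂)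
    (hmul₂ : ∀ a b : A, δ₂ (a * b) =
      a ^ p₂ * δ₂ b + b ^ p₂ * δ₂ a + (p₂ : A) * δ₂ a * δ₂ b)
    (hcomm : ∀ a : A,
      (p₁ : A) * (p₂ : A) * (δ₁ (δ₂ a) - δ₂ (δ₁ a)) =
        (p₂ : A) * MvPolynomial.aeval ![a ^ p₁, (p₁ : A) * δ₁ a] Cp₂
        - (p₁ : A) * MvPolynomial.aeval ![a ^ p₂, (p₂ : A) * δ₂ a] Cp₁
        - (p₁ : A) * (d₁₂ : A) * (δ₂ a) ^ p₁
        + (p₂ : A) * (d₂₁ : A) * (δ₁ a) ^ p₂) :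
    ∀ a : A,
      ((a ^ p₂ + (p₂ : A) * δ₂ a) ^ p₁ + (p₁ : A) * δ₁ (a ^ p₂ + (p₂ : A) * δ₂ a)) =
      ((a ^ p₁ + (p₁ : A) * δ₁ a) ^ p₂ + (p₂ : A) * δ₂ (a ^ p₁ + (p₁ : A) * δ₁ a)) :=
  stmt_4_general p₁ p₂ hp₁ hp₂ Cp₁ Cp₂ hCp₁ hCp₂ d₁₂ d₂₁ hd₁₂ hd₂₁ δ₁ δ₂ hadd₁ hmul₁ hadd₂ hmul₂
    hcomm
end

section
/- The polynomial C_{p_1,p_2}(X_0,X_1,X_2) lies in the ideal (X_0,X_1,X_2)^m of ℚ[X_0,X_1,X_2], where m = min{p_1,p_2}; in particular it has no monomials of total degree less than min{p_1,p_2}. -/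
open MvPolynomial

/-! Over `ℚ` the denominators are just scalars. With `I = (X₀, X₁, X₂)`, each summand is a scalar
multiple either of `X_i ^ p` or of `C_p(a, b) = a ^ p + b ^ p - (a + b) ^ p` with
`a, b ∈ I`, and both lie in `I ^ p`; here `p ∈ {p₁, p₂}` and `I ^ p ≤ I ^ min p₁ p₂`. -/

theorem Ideal.pow_add_pow_sub_add_pow_mem_pow {R : Type*} [CommRing R] {I : Ideal R} {a b : R}
    (ha : a ∈ I) (hb : b ∈ I) (n : ℕ) : a ^ n + b ^ n - (a + b) ^ n ∈ I ^ n :=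
  sub_mem (add_mem (pow_mem_pow ha n) (pow_mem_pow hb n)) (pow_mem_pow (add_mem ha hb) n)

theorem stmt_5_general (p₁ p₂ : ℕ) (hp₁ : p₁.Prime) (hp₂ : p₂.Prime) :
    (((p₁ : ℚ) * p₂)⁻¹ •
        (((X 0) ^ p₁) ^ p₂ + ((p₁ : ℚ) • X 1) ^ p₂
          - ((X 0) ^ p₁ + (p₁ : ℚ) • X 1) ^ p₂)
      - ((p₁ : ℚ) * p₂)⁻¹ •
        (((X 0) ^ p₂) ^ p₁ + ((p₂ : ℚ) • X 2) ^ p₁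
          - ((X 0) ^ p₂ + (p₂ : ℚ) • X 2) ^ p₁)
      - (((p₂ : ℚ) - (p₂ : ℚ) ^ p₁) / ((p₁ : ℚ) * p₂)) • (X 2) ^ p₁
      + (((p₁ : ℚ) - (p₁ : ℚ) ^ p₂) / ((p₁ : ℚ) * p₂)) • (X 1) ^ p₂
      : MvPolynomial (Fin 3) ℚ)
    ∈ (Ideal.span ({X 0, X 1, X 2} : Set (MvPolynomial (Fin 3) ℚ))) ^ (min p₁ p₂) := by
  set I : Ideal (MvPolynomial (Fin 3) ℚ) := Ideal.span {X 0, X 1, X 2}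
  have hX (i : Fin 3) : X i ∈ I := Ideal.subset_span (by fin_cases i <;> simp)
  have hX₀ {p : ℕ} (hp : p.Prime) : X 0 ^ p ∈ I := I.pow_mem_of_mem (hX 0) p hp.pos
  have hsmulX (c : ℚ) (i : Fin 3) : c • X i ∈ I := Submodule.smul_of_tower_mem _ c (hX i)
  have h₁ : I ^ p₁ ≤ I ^ min p₁ p₂ := Ideal.pow_le_pow_right (min_le_left _ _)
  have h₂ : I ^ p₂ ≤ I ^ min p₁ p₂ := Ideal.pow_le_pow_right (min_le_right _ _)
  refine add_mem (sub_mem (sub_mem ?_ ?_) ?_) ?_ <;> refine Submodule.smul_of_tower_mem _ _ ?_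
  · exact h₂ (Ideal.pow_add_pow_sub_add_pow_mem_pow (hX₀ hp₁) (hsmulX _ 1) p₂)
  · exact h₁ (Ideal.pow_add_pow_sub_add_pow_mem_pow (hX₀ hp₂) (hsmulX _ 2) p₁)
  · exact h₁ (Ideal.pow_mem_pow (hX 2) p₁)
  · exact h₂ (Ideal.pow_mem_pow (hX 1) p₂)

/-- The polynomial
`C_{p₁,p₂} = C_{p₂}(X₀^{p₁}, p₁X₁)/p₁ - C_{p₁}(X₀^{p₂}, p₂X₂)/p₂
  - (δ_{p₁}p₂/p₂)X₂^{p₁} + (δ_{p₂}p₁/p₁)X₁^{p₂}`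
(where `C_p(X,Y) = (X^p+Y^p-(X+Y)^p)/p` and `δ_p(a) = (a-a^p)/p`) lies in
`(X₀,X₁,X₂)^{min{p₁,p₂}}` in `ℚ[X₀,X₁,X₂]`. -/
theorem stmt_5 (p₁ p₂ : ℕ) (hp₁ : p₁.Prime) (hp₂ : p₂.Prime) (hne : p₁ ≠ p₂) :
    (((p₁ : ℚ) * p₂)⁻¹ •
        (((X 0) ^ p₁) ^ p₂ + ((p₁ : ℚ) • X 1) ^ p₂
          - ((X 0) ^ p₁ + (p₁ : ℚ) • X 1) ^ p₂)
      - ((p₁ : ℚ) * p₂)⁻¹ •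
        (((X 0) ^ p₂) ^ p₁ + ((p₂ : ℚ) • X 2) ^ p₁
          - ((X 0) ^ p₂ + (p₂ : ℚ) • X 2) ^ p₁)
      - (((p₂ : ℚ) - (p₂ : ℚ) ^ p₁) / ((p₁ : ℚ) * p₂)) • (X 2) ^ p₁
      + (((p₁ : ℚ) - (p₁ : ℚ) ^ p₂) / ((p₁ : ℚ) * p₂)) • (X 1) ^ p₂
      : MvPolynomial (Fin 3) ℚ)
    ∈ (Ideal.span ({X 0, X 1, X 2} : Set (MvPolynomial (Fin 3) ℚ))) ^ (min p₁ p₂) :=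
  stmt_5_general p₁ p₂ hp₁ hp₂
end

section
/- Let p be a prime and Λ = Σ_n λ_n φ_n ∈ ℚ[φ_{p_1},...,φ_{p_s}] a polynomial in commuting symbols (indexed by monomials n in the primes p_1,...,p_s). If Λ ⋆ l(T) ∈ ℤ_{p_k}[[T]] ⊗ ℚ for some k, where l(T) = Σ (-1)^{n-1}T^n/n and φ_n ⋆ T^m = T^{nm}, then Λ is divisible by φ_{p_k} - p_k in ℚ[φ_{p_1},...,φ_{p_s}]. -/
/-!
Write `p = P k` and `n_e = p ^ e_k * r_e` with `p ∤ r_e`. For `m = q * p ^ N` with `N` larger than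
every `e_k`, the coefficient of `T ^ m` in `Λ ⋆ l(T)` is `S_q / (q * p ^ N)` with `S_q` independent
of `N`: the sign `(-1) ^ (m / n_e - 1)` only sees the parity of `p ^ (N - e_k)`. Bounded `p`-adic
denominators then force `S_q = 0` for every `q`. Grouping the terms of `S_q` by `r_e`, this is a
triangular system (for divisibility of the `r_e`) in the coefficients of `Λ(X_k := p)`, so
`Λ(X_k := p) = 0`, i.e. `X_k - p ∣ Λ`.
-/

open MvPolynomial

namespace MvPolynomial

variable {σ R : Type*}

theorem X_sub_C_dvd_sub_aeval_update [CommRing R] [DecidableEq σ] (Q : MvPolynomial σ R) (k : σ)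
    (a : R) : X k - C a ∣ Q - aeval (Function.update X k (C a)) Q := by
  rw [← Ideal.mem_span_singleton, ← Ideal.Quotient.eq]
  set I := Ideal.span {(X k - C a : MvPolynomial σ R)}
  have hcomp : (Ideal.Quotient.mkₐ R I).comp (aeval (Function.update X k (C a))) =
      Ideal.Quotient.mkₐ R I := by
    ext i
    rcases eq_or_ne i k with rfl | hik
    · simp only [AlgHom.comp_apply, aeval_X, Function.update_self, Ideal.Quotient.mkₐ_eq_mk]
      exact (Ideal.Quotient.eq.mpr (Ideal.mem_span_singleton_self _)).symm
    · simp [hik]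
  exact (DFunLike.congr_fun hcomp Q).symm

variable [CommSemiring R]

theorem aeval_update_monomial [DecidableEq σ] (k : σ) (a : R) (e : σ →₀ ℕ) (c : R) :
    aeval (Function.update X k (C a)) (monomial e c) =
      monomial (Finsupp.erase k e) (c * a ^ e k) := by
  rw [aeval_monomial, ← Finsupp.mul_prod_erase' e k _ fun _ => pow_zero _, monomial_eq]
  have hrest : ((Finsupp.erase k e).prod fun i t => Function.update (X : σ → MvPolynomial σ R) k
      (C a) i ^ t) = (Finsupp.erase k e).prod fun i t => X i ^ t :=
    Finsupp.prod_congr fun i hi => by rw [Function.update_of_ne (by rintro rfl; simp at hi)]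
  simp [hrest, mul_assoc]

theorem sum_support_aeval_update [DecidableEq σ] (Q : MvPolynomial σ R) (k : σ) (a : R)
    (g : (σ →₀ ℕ) → R) :
    ∑ d ∈ (aeval (Function.update X k (C a)) Q).support,
        (aeval (Function.update X k (C a)) Q).coeff d * g d =
      ∑ e ∈ Q.support, Q.coeff e * a ^ e k * g (Finsupp.erase k e) := by
  have hsum (Q : MvPolynomial σ R) (f : (σ →₀ ℕ) → R) :
      ∑ d ∈ Q.support, Q.coeff d * f d = (AddMonoidAlgebra.coeff Q).sum fun d c => c * f d :=
    (sum_def (b := fun d c => c * f d)).symm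
  simp only [mul_assoc]
  rw [hsum, hsum Q fun e => a ^ e k * g (Finsupp.erase k e)]
  induction Q using MvPolynomial.induction_on' with
  | monomial e c =>
    rw [aeval_update_monomial]
    simp [mul_assoc]
  | add p q hp hq =>
    rw [map_add, AddMonoidAlgebra.coeff_add, AddMonoidAlgebra.coeff_add,
      Finsupp.sum_add_index' (by simp) (fun _ _ _ => add_mul ..),
      Finsupp.sum_add_index' (by simp) (fun _ _ _ => add_mul ..), hp, hq]

theorem eq_zero_of_forall_sum_coeff_mul_eq_zero [NoZeroDivisors R] {Q : MvPolynomial σ R}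
    {n : (σ →₀ ℕ) → ℕ} (hn : Function.Injective n) (hn_pos : ∀ d, 0 < n d)
    {W : ℕ → (σ →₀ ℕ) → R} (hW_dvd : ∀ q d, W q d ≠ 0 → n d ∣ q)
    (hW_self : ∀ d, W (n d) d ≠ 0)
    (h : ∀ q, 0 < q → ∑ d ∈ Q.support, Q.coeff d * W q d = 0) : Q = 0 := by
  suffices ∀ m d, n d = m → Q.coeff d = 0 from MvPolynomial.ext _ _ fun d => this _ d rfl
  intro m
  induction m using Nat.strong_induction_on with
  | _ m ih =>
    rintro d rfl
    have hsum := h (n d) (hn_pos d)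
    rw [Finset.sum_eq_single d] at hsum
    · exact (mul_eq_zero.mp hsum).resolve_right (hW_self d)
    · intro d' _ hd'
      by_cases hW : W (n d) d' = 0
      · rw [hW, mul_zero]
      · have hlt : n d' < n d :=
          (Nat.le_of_dvd (hn_pos d) (hW_dvd _ _ hW)).lt_of_ne (hn.ne hd')
        rw [ih _ hlt d' rfl, zero_mul]
    · intro hd
      rw [notMem_support_iff.mp hd, zero_mul]

end MvPolynomial

theorem neg_one_pow_mul_pow_sub_one {R : Type*} [Monoid R] [HasDistribNeg R] {a : ℕ} (ha : a ≠ 0)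
    (r p : ℕ) : (-1 : R) ^ (r * p ^ a - 1) = (-1) ^ (r * p - 1) := by
  apply neg_one_pow_congr
  rcases Nat.eq_zero_or_pos (r * p) with h | h
  · have : r * p ^ a = 0 := by simp_all
    simp [h, this]
  · have : 0 < r * p ^ a := by simp_all [Nat.pos_iff_ne_zero]
    rw [Nat.even_sub (by omega), Nat.even_sub (by omega)]
    simp [Nat.even_mul, Nat.even_pow, ha]

theorem Rat.eq_zero_of_forall_not_dvd_den_div_pow {p : ℕ} [Fact p.Prime] {x : ℚ} (N₀ : ℕ)
    (h : ∀ N ≥ N₀, ¬ p ∣ (x / (p : ℚ) ^ N).den) : x = 0 := by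
  by_contra hx
  have hx_norm : 0 < ‖(x : ℚ_[p])‖ := norm_pos_iff.mpr (by exact_mod_cast hx)
  obtain ⟨n, hn⟩ := pow_unbounded_of_one_lt ‖(x : ℚ_[p])‖⁻¹
    (Nat.one_lt_cast.mpr (Fact.out : p.Prime).one_lt)
  have hle := Padic.norm_rat_le_one (h (max N₀ n) (le_max_left _ _))
  have hp : (1 : ℝ) ≤ p := by exact_mod_cast (Fact.out : p.Prime).one_le
  push_cast at hle
  rw [norm_div, norm_pow, Padic.norm_p, inv_pow, div_inv_eq_mul] at hle
  have := (inv_lt_iff_one_lt_mul₀' hx_norm).mp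
    (hn.trans_le (pow_le_pow_right₀ hp (le_max_right N₀ n)))
  linarith

-- The monomial `X ^ e` stands for the symbol `φ_n` with `n = symbolIndex P e`.
def symbolIndex {σ : Type*} (P : σ → ℕ) (e : σ →₀ ℕ) : ℕ :=
  e.prod fun i t => P i ^ t

section symbolIndex

variable {σ : Type*} {P : σ → ℕ}

theorem factorization_symbolIndex (hP : ∀ i, (P i).Prime) (e : σ →₀ ℕ) :
    (symbolIndex P e).factorization = e.mapDomain P := by
  classical
  rw [symbolIndex, ← Finsupp.prod_mapDomain_index (f := P) (h := fun p t => p ^ t)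
    (fun _ => pow_zero _) (fun _ _ _ => pow_add ..)]
  refine Nat.prod_pow_factorization_eq_self fun p hp => ?_
  obtain ⟨i, -, rfl⟩ := Finset.mem_image.mp (Finsupp.mapDomain_support hp)
  exact hP i

theorem symbolIndex_injective (hP : ∀ i, (P i).Prime) (hinj : Function.Injective P) :
    Function.Injective (symbolIndex P) := fun e e' h =>
  Finsupp.mapDomain_injective hinj <| by
    rw [← factorization_symbolIndex hP, ← factorization_symbolIndex hP, h]

theorem symbolIndex_pos (hP : ∀ i, 0 < P i) (e : σ →₀ ℕ) : 0 < symbolIndex P e :=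
  Finset.prod_pos fun i _ => pow_pos (hP i) _

theorem symbolIndex_eq_pow_mul_erase [DecidableEq σ] (P : σ → ℕ) (e : σ →₀ ℕ) (k : σ) :
    symbolIndex P e = P k ^ e k * symbolIndex P (Finsupp.erase k e) :=
  (Finsupp.mul_prod_erase' e k _ fun _ => pow_zero _).symm

theorem not_dvd_symbolIndex_erase [DecidableEq σ] (hP : ∀ i, (P i).Prime)
    (hinj : Function.Injective P) (e : σ →₀ ℕ) (k : σ) :
    ¬ P k ∣ symbolIndex P (Finsupp.erase k e) := by
  rw [(hP k).dvd_iff_one_le_factorization (symbolIndex_pos (fun i => (hP i).pos) _).ne',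
    factorization_symbolIndex hP, Finsupp.mapDomain_apply hinj, Finsupp.erase_same]
  exact Nat.not_succ_le_zero 0

end symbolIndex

-- The coefficient of `T ^ m` in `φ_n ⋆ l(T)`.
def logCoeff (n m : ℕ) : ℚ :=
  if n ∣ m ∧ m ≠ 0 then (-1) ^ (m / n - 1) / ((m / n : ℕ) : ℚ) else 0

def logWeight (p q r : ℕ) : ℚ :=
  if r ∣ q then (-1) ^ (q / r * p - 1) * r else 0

theorem dvd_of_logWeight_ne_zero {p q r : ℕ} (h : logWeight p q r ≠ 0) : r ∣ q := by
  by_contra hrq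
  exact h (if_neg hrq)

theorem logWeight_self_ne_zero (p : ℕ) {r : ℕ} (hr : 0 < r) : logWeight p r r ≠ 0 := by
  simp [logWeight, Nat.div_self hr, hr.ne']

theorem logCoeff_pow_mul {p r : ℕ} (hp : p.Prime) (hr : ¬ p ∣ r) {a N : ℕ} (haN : a < N)
    {q : ℕ} (hq : 0 < q) :
    logCoeff (p ^ a * r) (q * p ^ N) = p ^ a * logWeight p q r / (q * p ^ N) := by
  have hp_pos := hp.pos
  have hr_pos : 0 < r := Nat.pos_of_ne_zero (by rintro rfl; exact hr (dvd_zero p))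
  obtain ⟨b, rfl⟩ := Nat.exists_eq_add_of_lt haN
  unfold logCoeff logWeight
  by_cases hrq : r ∣ q
  · obtain ⟨t, rfl⟩ := hrq
    have ht : 0 < t := Nat.pos_of_mul_pos_left hq
    have hquot : r * t * p ^ (a + b + 1) / (p ^ a * r) = t * p ^ (b + 1) := by
      rw [Nat.div_eq_iff_eq_mul_left (by positivity) ⟨t * p ^ (b + 1), by ring⟩]
      ring
    rw [if_pos ⟨⟨t * p ^ (b + 1), by ring⟩, by positivity⟩, if_pos (dvd_mul_right r t), hquot,
      Nat.mul_div_cancel_left t hr_pos, neg_one_pow_mul_pow_sub_one b.succ_ne_zero]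
    have : (p : ℚ) ≠ 0 := by exact_mod_cast hp.ne_zero
    push_cast
    field_simp
    ring
  · have hcop : Nat.Coprime r (p ^ (a + b + 1)) :=
      (Nat.coprime_comm.mp (hp.coprime_iff_not_dvd.mpr hr)).pow_right _
    have hndvd : ¬ (p ^ a * r ∣ q * p ^ (a + b + 1) ∧ q * p ^ (a + b + 1) ≠ 0) := fun h =>
      hrq (hcop.dvd_of_dvd_mul_right ((dvd_mul_left r _).trans h.1))
    rw [if_neg hndvd, if_neg hrq, mul_zero, zero_div]

theorem sum_coeff_mul_logWeight_eq_zero {σ : Type*} [DecidableEq σ] {P : σ → ℕ}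
    (hP : ∀ i, (P i).Prime) (hinj : Function.Injective P) (k : σ) (Λ : MvPolynomial σ ℚ)
    (hbound : ∃ j : ℕ, ∀ m : ℕ,
      ¬ P k ∣ ((P k : ℚ) ^ j * ∑ e ∈ Λ.support, Λ.coeff e * logCoeff (symbolIndex P e) m).den)
    {q : ℕ} (hq : 0 < q) :
    ∑ e ∈ Λ.support, Λ.coeff e * (P k : ℚ) ^ e k *
      logWeight (P k) q (symbolIndex P (Finsupp.erase k e)) = 0 := by
  obtain ⟨j, hj⟩ := hbound
  have := Fact.mk (hP k)
  set S := ∑ e ∈ Λ.support, Λ.coeff e * (P k : ℚ) ^ e k *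
    logWeight (P k) q (symbolIndex P (Finsupp.erase k e))
  have hcoeff : ∀ N > Λ.support.sup (· k), (P k : ℚ) ^ j * ∑ e ∈ Λ.support,
      Λ.coeff e * logCoeff (symbolIndex P e) (q * P k ^ N) = (P k : ℚ) ^ j * S / q / P k ^ N := by
    intro N hN
    have hterm : ∀ e ∈ Λ.support, Λ.coeff e * logCoeff (symbolIndex P e) (q * P k ^ N) =
        Λ.coeff e * (P k : ℚ) ^ e k * logWeight (P k) q (symbolIndex P (Finsupp.erase k e)) /
          (q * P k ^ N) := fun e he => by
      rw [symbolIndex_eq_pow_mul_erase P e k, logCoeff_pow_mul (hP k)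
        (not_dvd_symbolIndex_erase hP hinj e k) ((Finset.le_sup he).trans_lt hN) hq]
      ring
    rw [Finset.sum_congr rfl hterm, ← Finset.sum_div]
    ring
  have hx := Rat.eq_zero_of_forall_not_dvd_den_div_pow (p := P k) (Λ.support.sup (· k) + 1)
    fun N hN => hcoeff N hN ▸ hj (q * P k ^ N)
  have hp : (P k : ℚ) ≠ 0 := by exact_mod_cast (hP k).ne_zero
  have hq' : (q : ℚ) ≠ 0 := by exact_mod_cast hq.ne'
  simpa [hp, hq'] using hx

/-- Let `Λ = Σ_n λ_n φ_n ∈ ℚ[φ_{p_1},…,φ_{p_s}]` be a polynomial in commuting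
symbols, acting on `ℚ[[T]]` by `φ_n ⋆ T^m = T^{nm}` (where `n = ∏ p_i^{e_i}`).
If `Λ ⋆ l(T) ∈ ℤ_{p_k}[[T]] ⊗ ℚ` for some `k` (bounded `p_k`-adic
denominators), where `l(T) = Σ_{n≥1} (-1)^{n-1} T^n/n`, then `φ_{p_k} - p_k`
divides `Λ` in `ℚ[φ_{p_1},…,φ_{p_s}]`. -/
theorem stmt_9 (s : ℕ) (P : Fin s → ℕ) (hP : ∀ i, (P i).Prime)
    (hinj : Function.Injective P)
    (k : Fin s) (Λ : MvPolynomial (Fin s) ℚ)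
    (hbound : ∃ j : ℕ, ∀ m : ℕ,
      ¬ P k ∣ ((P k : ℚ) ^ j *
        ∑ e ∈ Λ.support, Λ.coeff e *
          (if (e.prod fun i t => P i ^ t) ∣ m ∧ m ≠ 0
            then (-1 : ℚ) ^ (m / (e.prod fun i t => P i ^ t) - 1) /
              ((m / (e.prod fun i t => P i ^ t) : ℕ) : ℚ)
            else 0)).den) :
    (MvPolynomial.X k - MvPolynomial.C (P k : ℚ)) ∣ Λ := by
  have hpos : ∀ d, 0 < symbolIndex P d := symbolIndex_pos fun i => (hP i).pos
  have hsubst : aeval (Function.update X k (C (P k : ℚ))) Λ = 0 :=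
    eq_zero_of_forall_sum_coeff_mul_eq_zero (symbolIndex_injective hP hinj) hpos
      (W := fun q d => logWeight (P k) q (symbolIndex P d))
      (fun _ _ => dvd_of_logWeight_ne_zero) (fun d => logWeight_self_ne_zero _ (hpos d))
      fun q hq => by
        rw [sum_support_aeval_update]
        exact sum_coeff_mul_logWeight_eq_zero hP hinj k Λ hbound hq
  simpa only [hsubst, sub_zero] using X_sub_C_dvd_sub_aeval_update Λ k (P k : ℚ)
end

section
/- Let A = ℤ_{(P)}[ζ_m] with m coprime to the primes in P, let M = [ℚ(ζ_m):ℚ], and let φ_p be the automorphism of the p-adic completion A^ of A induced by ζ_m ↦ ζ_m^p. Then for any prime p ∈ P and any β ∈ A^ with (φ_p - p)β = 0, we have β = 0. -/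
namespace RingHom

variable {R : Type*}

theorem iterate_apply_eq_natCast_pow_mul [Semiring R] (φ : R →+* R) {k : ℕ} {β : R}
    (hβ : φ β = k * β) (n : ℕ) : φ^[n] β = (k : R) ^ n * β := by
  induction n with
  | zero => simp
  | succ n ih =>
    rw [Function.iterate_succ_apply', ih, map_mul, map_pow, map_natCast, hβ, pow_succ, mul_assoc]

theorem zsmul_natCast_pow_sub_one_eq_zero [Ring R] (φ : R →+* R) {k n : ℕ} {β : R}
    (hβ : φ β = k * β) (hper : φ^[n] β = β) : ((k : ℤ) ^ n - 1) • β = 0 := by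
  have hfix : (k : R) ^ n * β = β := by rw [← φ.iterate_apply_eq_natCast_pow_mul hβ, hper]
  rw [sub_smul, one_smul, zsmul_eq_mul]
  push_cast
  rw [hfix, sub_self]

end RingHom

theorem stmt_13_general (p m : ℕ) (hp : p.Prime) (hm : 0 < m)
    (R : Type*) [CommRing R]
    (htf : ∀ n : ℤ, n ≠ 0 → ∀ x : R, n • x = 0 → x = 0)
    (φ : R →+* R)
    (hφM : ∀ x : R, (⇑φ)^[Nat.totient m] x = x) :
    ∀ β : R, φ β = (p : R) * β → β = 0 := by
  intro β hβ
  have hpow : (1 : ℤ) < (p : ℤ) ^ Nat.totient m :=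
    one_lt_pow₀ (by exact_mod_cast hp.one_lt) (Nat.totient_pos.mpr hm).ne'
  exact htf _ (sub_ne_zero.mpr hpow.ne') β (φ.zsmul_natCast_pow_sub_one_eq_zero hβ (hφM β))

/-- Let `A = ℤ_{(P)}[ζ_m]` with `m` coprime to the primes in `P`,
`M = [ℚ(ζ_m):ℚ] = φ(m)`, and `φ_p` the automorphism of the `p`-adic completion
`A^` induced by `ζ_m ↦ ζ_m^p`. Then `(φ_p - p)β = 0` forces `β = 0`.
(The completion `A^` is modelled by a torsion-free commutative ring `R`
equipped with the endomorphism `φ` of order dividing `M = φ(m)`.) -/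
theorem stmt_13 (p m : ℕ) (hp : p.Prime) (hm : 0 < m)
    (hcop : Nat.Coprime p m)
    (R : Type*) [CommRing R]
    (htf : ∀ n : ℤ, n ≠ 0 → ∀ x : R, n • x = 0 → x = 0)
    (φ : R →+* R)
    (hφM : ∀ x : R, (⇑φ)^[Nat.totient m] x = x) :
    ∀ β : R, φ β = (p : R) * β → β = 0 :=
  stmt_13_general p m hp hm R htf φ hφM
end
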